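/- arXiv:1801.06321 — 5 statements merged into one kernel-verified Lean document; each statement's English description precedes it below -/
import Mathlib

section
/- Let P be a polynomial in one complex variable with nonnegative real coefficients and P(0) = c₀ > 0, and let {a_n} be positive reals with 0 < a_{n+1} < a_n² < 1. Define F_n(z₁,z₂) = (a_n z₂ + z₁² P(z₁), a_n z₁) and let F(n) = F_n ∘ ⋯ ∘ F₀ with components F(n) = (f₁ⁿ, f₂ⁿ). Then for all real x > 0, y > 0 and all n ≥ 0: f₁ⁿ(x,y) > c₀^{-1}(c₀ x)^{2^{n+1}} > 0 and f₂ⁿ(x,y) > 0. -/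
lemma evalAux (P : Polynomial ℂ) (c₀ : ℝ)
    (hP : ∀ i, 0 ≤ (P.coeff i).re ∧ (P.coeff i).im = 0)
    (hP0 : P.coeff 0 = (c₀ : ℂ)) (t : ℝ) (ht : 0 ≤ t) :
    (P.eval (t : ℂ)).im = 0 ∧ c₀ ≤ (P.eval (t : ℂ)).re := by
  rw [Polynomial.eval_eq_sum_range]
  constructor
  · rw [Complex.im_sum]
    apply Finset.sum_eq_zero
    intro i _
    simp [← Complex.ofReal_pow, Complex.mul_im, (hP i).2]
  · rw [Complex.re_sum]
    have h0 : (P.coeff 0 * (t:ℂ) ^ 0).re = c₀ := by simp [hP0]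
    calc c₀ = (P.coeff 0 * (t:ℂ) ^ 0).re := h0.symm
      _ ≤ ∑ i ∈ Finset.range (P.natDegree + 1), (P.coeff i * (t:ℂ) ^ i).re := by
          apply Finset.single_le_sum (f := fun i => (P.coeff i * (t:ℂ) ^ i).re)
          · intro i _
            simp only [← Complex.ofReal_pow, Complex.mul_re, Complex.ofReal_re,
              Complex.ofReal_im, mul_zero, sub_zero]
            exact mul_nonneg (hP i).1 (pow_nonneg ht i)
          · simp

/-- step computation -/
lemma stepAux (P : Polynomial ℂ) (c₀ : ℝ) (hc₀ : 0 < c₀)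
    (hP : ∀ i, 0 ≤ (P.coeff i).re ∧ (P.coeff i).im = 0)
    (hP0 : P.coeff 0 = (c₀ : ℂ))
    (A : ℝ) (hA : 0 < A) (B : ℝ) (hB : 0 < B)
    (u : ℂ × ℂ) (h1 : B ≤ u.1.re) (h2 : u.1.im = 0) (h3 : 0 < u.2.re) (h4 : u.2.im = 0) :
    B ^ 2 * c₀ < ((A : ℂ) * u.2 + u.1 ^ 2 * P.eval u.1).re ∧
    ((A : ℂ) * u.2 + u.1 ^ 2 * P.eval u.1).im = 0 ∧
    0 < ((A : ℂ) * u.1).re ∧ ((A : ℂ) * u.1).im = 0 := by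
  set r := u.1.re with hr
  have hu1 : u.1 = (r : ℂ) := Complex.ext rfl (by simp [h2])
  have hrpos : 0 < r := hB.trans_le h1
  obtain ⟨him, hre⟩ := evalAux P c₀ hP hP0 r hrpos.le
  have key : ((A : ℂ) * u.2 + u.1 ^ 2 * P.eval u.1).re
      = A * u.2.re + r ^ 2 * (P.eval (r:ℂ)).re := by
    rw [hu1]
    simp [Complex.add_re, Complex.mul_re, Complex.mul_im, ← Complex.ofReal_pow, h4, him]
  have keyim : ((A : ℂ) * u.2 + u.1 ^ 2 * P.eval u.1).im = 0 := by
    rw [hu1]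
    simp [Complex.add_im, Complex.mul_im, ← Complex.ofReal_pow, h4, him]
  refine ⟨?_, keyim, ?_, ?_⟩
  · rw [key]
    have h5 : B ^ 2 * c₀ ≤ r ^ 2 * (P.eval (r:ℂ)).re := by
      have : B ^ 2 ≤ r ^ 2 := by nlinarith
      nlinarith
    nlinarith [mul_pos hA h3]
  · simp [Complex.mul_re, hu1]; positivity
  · simp [Complex.mul_im, hu1]

/-- for `F_n(z₁,z₂) = (a_n z₂ + z₁² P(z₁), a_n z₁)` with `P` having
nonnegative real coefficients, `P(0) = c₀ > 0`, and `0 < a_{n+1} < a_n² < 1`, the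
composition `F(n) = F_n ∘ ⋯ ∘ F₀ = (f₁ⁿ, f₂ⁿ)` satisfies, for all real `x, y > 0`,
`f₁ⁿ(x,y) > c₀⁻¹ (c₀ x)^{2^{n+1}} > 0` and `f₂ⁿ(x,y) > 0` (all values being real). -/
theorem stmt3 (P : Polynomial ℂ) (c₀ : ℝ) (hc₀ : 0 < c₀)
    (hP : ∀ i, 0 ≤ (P.coeff i).re ∧ (P.coeff i).im = 0)
    (hP0 : P.coeff 0 = (c₀ : ℂ))
    (a : ℕ → ℝ) (ha : ∀ n, 0 < a (n + 1) ∧ a (n + 1) < (a n) ^ 2 ∧ (a n) ^ 2 < 1)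
    (ha0 : 0 < a 0)
    (F : ℕ → ℂ × ℂ → ℂ × ℂ)
    (hF : ∀ n z, F n z = ((a n : ℂ) * z.2 + z.1 ^ 2 * P.eval z.1, (a n : ℂ) * z.1))
    (Fc : ℕ → ℂ × ℂ → ℂ × ℂ)
    (hFc0 : ∀ z, Fc 0 z = F 0 z) (hFcS : ∀ n z, Fc (n + 1) z = F (n + 1) (Fc n z)) :
    ∀ x y : ℝ, 0 < x → 0 < y → ∀ n : ℕ,
      0 < c₀⁻¹ * (c₀ * x) ^ (2 ^ (n + 1)) ∧
      c₀⁻¹ * (c₀ * x) ^ (2 ^ (n + 1)) < (Fc n ((x : ℂ), (y : ℂ))).1.re ∧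
      (Fc n ((x : ℂ), (y : ℂ))).1.im = 0 ∧
      0 < (Fc n ((x : ℂ), (y : ℂ))).2.re ∧
      (Fc n ((x : ℂ), (y : ℂ))).2.im = 0 := by
  intro x y hx hy n
  have hBpos : ∀ k : ℕ, 0 < c₀⁻¹ * (c₀ * x) ^ (2 ^ (k + 1)) := by
    intro k; positivity
  induction n with
  | zero =>
    have step := stepAux P c₀ hc₀ hP hP0 (a 0) ha0 x hx ((x:ℂ), (y:ℂ))
      (by simp) (by simp) (by simpa using hy) (by simp)
    rw [hFc0, hF]
    have hB2 : x ^ 2 * c₀ = c₀⁻¹ * (c₀ * x) ^ (2 ^ (0 + 1)) := by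
      field_simp; ring
    refine ⟨hBpos 0, ?_, step.2.1, step.2.2⟩
    rw [← hB2]; exact step.1
  | succ n ih =>
    obtain ⟨hB, h1, h2, h3, h4⟩ := ih
    have step := stepAux P c₀ hc₀ hP hP0 (a (n+1)) (ha n).1
      (c₀⁻¹ * (c₀ * x) ^ (2 ^ (n + 1))) hB (Fc n ((x:ℂ), (y:ℂ))) h1.le h2 h3 h4
    rw [hFcS, hF]
    have hB2 : (c₀⁻¹ * (c₀ * x) ^ (2 ^ (n + 1))) ^ 2 * c₀
        = c₀⁻¹ * (c₀ * x) ^ (2 ^ (n + 1 + 1)) := by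
      rw [pow_succ (2:ℕ) (n+1), pow_mul]
      field_simp
    refine ⟨hBpos (n+1), ?_, step.2.1, step.2.2⟩
    rw [← hB2]; exact step.1
end

section
/- Let {S_n} ⊂ Aut₀(C^k), k ≥ 2, satisfy the uniform upper-bound condition at the origin and let Ω_S be the basin of attraction at the origin. Then the infinitesimal Kobayashi metric on Ω_S vanishes identically: for every p ∈ Ω_S, every tangent vector ξ, and every R > 0, there exists a holomorphic map τ : Δ(0;1) → Ω_S with τ(0) = p and τ'(0) = Rξ. -/
/-!
Write `S(n) = S_n ∘ ⋯ ∘ S_0` (`Sc n` below) and pick `N` with `S(N)(p) ∈ B(0;r)`, the ball on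
which every `S_n` contracts by the factor `C`. From time `N` on, the orbits of the
neighbourhood `S(N)⁻¹(B(0;r))` of `p` tend to `0` uniformly, so by the Weierstrass theorem
along complex lines the derivatives `DS(n)(p)(Rξ)` tend to `0` as well. For `n` large the
affine disc `η_n(x) = S(n)(p) + x · DS(n)(p)(Rξ)`, `|x| < 1`, therefore lies in `B(0;r)`, and
`τ = S(n)⁻¹ ∘ η_n` lies in the basin, passes through `p` and has derivative `Rξ` at `0`.
-/

open Filter Metric Set Topology

section Orbit

variable {E : Type*} [SeminormedAddCommGroup E] {S Sc : ℕ → E → E} {r C : ℝ}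

theorem norm_orbit_add_le (hC0 : 0 ≤ C) (hC1 : C ≤ 1)
    (hS : ∀ n, ∀ z ∈ ball (0 : E) r, ‖S n z‖ ≤ C * ‖z‖)
    (hScS : ∀ n z, Sc (n + 1) z = S (n + 1) (Sc n z)) {N : ℕ} {z : E}
    (hz : Sc N z ∈ ball 0 r) (j : ℕ) :
    ‖Sc (N + j) z‖ ≤ C ^ j * ‖Sc N z‖ := by
  induction j with
  | zero => simp
  | succ j ih =>
    have hmem : Sc (N + j) z ∈ ball 0 r := by
      rw [mem_ball_zero_iff] at hz ⊢
      calc ‖Sc (N + j) z‖ ≤ C ^ j * ‖Sc N z‖ := ih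
        _ ≤ 1 * ‖Sc N z‖ := by gcongr; exact pow_le_one₀ hC0 hC1
        _ < r := by rwa [one_mul]
    calc ‖Sc (N + (j + 1)) z‖ = ‖S (N + j + 1) (Sc (N + j) z)‖ := by rw [← hScS]; rfl
      _ ≤ C * ‖Sc (N + j) z‖ := hS _ _ hmem
      _ ≤ C * (C ^ j * ‖Sc N z‖) := by gcongr
      _ = C ^ (j + 1) * ‖Sc N z‖ := by ring

theorem tendstoUniformlyOn_orbit_zero (hC0 : 0 ≤ C) (hC1 : C < 1)
    (hS : ∀ n, ∀ z ∈ ball (0 : E) r, ‖S n z‖ ≤ C * ‖z‖)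
    (hScS : ∀ n z, Sc (n + 1) z = S (n + 1) (Sc n z)) (N : ℕ) :
    TendstoUniformlyOn Sc 0 atTop (Sc N ⁻¹' ball 0 r) := by
  rw [Metric.tendstoUniformlyOn_iff]
  intro ε hε
  have hpow : Tendsto (fun m => C ^ (m - N) * r) atTop (𝓝 0) := by
    simpa using ((tendsto_pow_atTop_nhds_zero_of_lt_one hC0 hC1).comp
      (tendsto_sub_atTop_nat N)).mul_const r
  filter_upwards [eventually_ge_atTop N, hpow.eventually (gt_mem_nhds hε)] with m hm hmε z hz
  obtain ⟨j, rfl⟩ := Nat.exists_eq_add_of_le hm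
  rw [Nat.add_sub_cancel_left] at hmε
  calc dist ((0 : E → E) z) (Sc (N + j) z) = ‖Sc (N + j) z‖ := by simp
    _ ≤ C ^ j * ‖Sc N z‖ := norm_orbit_add_le hC0 hC1.le hS hScS hz j
    _ ≤ C ^ j * r := by gcongr; exact (mem_ball_zero_iff.mp hz).le
    _ < ε := hmε

end Orbit

section Holomorphic

variable {E F : Type*} [NormedAddCommGroup E] [NormedSpace ℂ E]
  [NormedAddCommGroup F] [NormedSpace ℂ F]

/-- Restricting to the complex line through `p` in direction `v` reduces this to the
one-variable Weierstrass theorem `TendstoLocallyUniformlyOn.deriv`. -/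
theorem tendsto_fderiv_apply_of_tendstoUniformlyOn [CompleteSpace F] {ι : Type*} {φ : Filter ι}
    {f : ι → E → F} {V : Set E} {p : E} (hV : IsOpen V) (hp : p ∈ V)
    (hf : ∀ i, Differentiable ℂ (f i)) (hlim : TendstoUniformlyOn f 0 φ V) (v : E) :
    Tendsto (fun i => fderiv ℂ (f i) p v) φ (𝓝 0) := by
  set L : ℂ → E := fun x => p + x • v
  have hL : HasDerivAt L v 0 :=
    (((hasDerivAt_id (0 : ℂ)).smul_const v).const_add p).congr_deriv (one_smul ℂ v)
  have hLd : Differentiable ℂ L := by fun_prop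
  have hU : IsOpen (L ⁻¹' V) := hV.preimage hLd.continuous
  have h0 : (0 : ℂ) ∈ L ⁻¹' V := by simpa [L] using hp
  have hderiv := ((hlim.comp L).tendstoLocallyUniformlyOn.deriv
    (Eventually.of_forall fun i => ((hf i).comp hLd).differentiableOn) hU).tendsto_at h0
  have hchain : ∀ i, deriv (f i ∘ L) 0 = fderiv ℂ (f i) p v := fun i => by
    have hfi : HasFDerivAt (f i) (fderiv ℂ (f i) p) (L 0) := by
      simpa [L] using (hf i p).hasFDerivAt
    exact (hfi.comp_hasDerivAt 0 hL).deriv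
  simpa [hchain] using hderiv

theorem hasDerivAt_line_comp_of_leftInverse {f : E → F} {g : F → E} {p : E}
    (hf : DifferentiableAt ℂ f p) (hg : DifferentiableAt ℂ g (f p))
    (hgf : Function.LeftInverse g f) (v : E) :
    HasDerivAt (fun x : ℂ => g (f p + x • fderiv ℂ f p v)) v 0 := by
  have hid : (fderiv ℂ g (f p)).comp (fderiv ℂ f p) = ContinuousLinearMap.id ℂ E := by
    have h := hg.hasFDerivAt.comp p hf.hasFDerivAt
    rw [hgf.comp_eq_id] at h
    exact h.unique (hasFDerivAt_id p)
  have hline : HasDerivAt (fun x : ℂ => f p + x • fderiv ℂ f p v) (fderiv ℂ f p v) 0 :=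
    (((hasDerivAt_id (0 : ℂ)).smul_const _).const_add (f p)).congr_deriv (one_smul ℂ _)
  have hg' : HasFDerivAt g (fderiv ℂ g (f p)) (f p + (0 : ℂ) • fderiv ℂ f p v) := by
    simpa using hg.hasFDerivAt
  simpa [Function.comp_def, ← ContinuousLinearMap.comp_apply, hid] using hg'.comp_hasDerivAt 0 hline

end Holomorphic

theorem add_smul_mem_ball_zero {𝕜 E : Type*} [NormedField 𝕜] [SeminormedAddCommGroup E]
    [NormedSpace 𝕜 E] {a w : E} {r : ℝ} (h : ‖a‖ + ‖w‖ < r) {x : 𝕜} (hx : x ∈ ball 0 1) :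
    a + x • w ∈ ball 0 r := by
  rw [mem_ball_zero_iff] at hx ⊢
  calc ‖a + x • w‖ ≤ ‖a‖ + ‖x‖ * ‖w‖ := (norm_add_le _ _).trans_eq (by rw [norm_smul])
    _ ≤ ‖a‖ + 1 * ‖w‖ := by gcongr
    _ < r := by rwa [one_mul]

section Automorphisms

variable {E : Type*} [NormedAddCommGroup E] [NormedSpace ℂ E] {S Sc : ℕ → E → E}

theorem differentiable_orbit (hdiff : ∀ n, Differentiable ℂ (S n))
    (hSc0 : ∀ z, Sc 0 z = S 0 z) (hScS : ∀ n z, Sc (n + 1) z = S (n + 1) (Sc n z)) (n : ℕ) :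
    Differentiable ℂ (Sc n) := by
  induction n with
  | zero => rw [funext hSc0]; exact hdiff 0
  | succ n ih => rw [funext (hScS n)]; exact (hdiff (n + 1)).comp ih

theorem exists_differentiable_inverse_orbit {Sinv : ℕ → E → E}
    (hdiffinv : ∀ n, Differentiable ℂ (Sinv n))
    (hinv : ∀ n z, Sinv n (S n z) = z) (hinv' : ∀ n z, S n (Sinv n z) = z)
    (hSc0 : ∀ z, Sc 0 z = S 0 z) (hScS : ∀ n z, Sc (n + 1) z = S (n + 1) (Sc n z)) (n : ℕ) :
    ∃ T : E → E, Differentiable ℂ T ∧ Function.LeftInverse T (Sc n) ∧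
      Function.RightInverse T (Sc n) := by
  induction n with
  | zero => exact ⟨Sinv 0, hdiffinv 0, fun z => by rw [hSc0, hinv],
      fun z => by rw [hSc0, hinv']⟩
  | succ n ih =>
    obtain ⟨T, hT, hleft, hright⟩ := ih
    exact ⟨T ∘ Sinv (n + 1), hT.comp (hdiffinv _), fun z => by simp [hScS, hinv, hleft z],
      fun z => by simp [hScS, hright _, hinv']⟩

end Automorphisms

theorem stmt6_general {k : ℕ}
    (S Sinv : ℕ → EuclideanSpace ℂ (Fin k) → EuclideanSpace ℂ (Fin k))
    (hdiff : ∀ n, Differentiable ℂ (S n)) (hdiffinv : ∀ n, Differentiable ℂ (Sinv n))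
    (hinv : ∀ n z, Sinv n (S n z) = z) (hinv' : ∀ n z, S n (Sinv n z) = z)
    (r C : ℝ) (hr : 0 < r) (hC : C < 1)
    (hS : ∀ n, ∀ z ∈ ball (0 : EuclideanSpace ℂ (Fin k)) r, ‖S n z‖ ≤ C * ‖z‖)
    (Sc : ℕ → EuclideanSpace ℂ (Fin k) → EuclideanSpace ℂ (Fin k))
    (hSc0 : ∀ z, Sc 0 z = S 0 z) (hScS : ∀ n z, Sc (n + 1) z = S (n + 1) (Sc n z)) :
    ∀ p ∈ {z | Tendsto (fun n => Sc n z) atTop (nhds 0)},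
      ∀ ξ : EuclideanSpace ℂ (Fin k), ∀ R : ℝ, 0 < R →
        ∃ τ : ℂ → EuclideanSpace ℂ (Fin k),
          DifferentiableOn ℂ τ (ball (0 : ℂ) 1) ∧
          MapsTo τ (ball (0 : ℂ) 1) {z | Tendsto (fun n => Sc n z) atTop (nhds 0)} ∧
          τ 0 = p ∧ HasDerivAt τ (R • ξ) 0 := by
  intro p hp ξ R _
  -- `max C 0` is a nonnegative contraction factor as well
  have hS' : ∀ n, ∀ z ∈ ball 0 r, ‖S n z‖ ≤ max C 0 * ‖z‖ := fun n z hz =>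
    (hS n z hz).trans (by gcongr; exact le_max_left C 0)
  have hunif := tendstoUniformlyOn_orbit_zero (le_max_right C 0) (max_lt hC one_pos) hS' hScS
  have hdiffSc := differentiable_orbit hdiff hSc0 hScS
  obtain ⟨N, hN⟩ := (Tendsto.eventually hp (ball_mem_nhds 0 hr)).exists
  have hderiv := tendsto_fderiv_apply_of_tendstoUniformlyOn
    (isOpen_ball.preimage (hdiffSc N).continuous) hN hdiffSc (hunif N) (R • ξ)
  obtain ⟨n, hn⟩ := (((tendsto_norm_zero.comp hp).add (tendsto_norm_zero.comp hderiv)).eventually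
    (gt_mem_nhds (by simpa using hr))).exists
  obtain ⟨T, hT, hleft, hright⟩ :=
    exists_differentiable_inverse_orbit hdiffinv hinv hinv' hSc0 hScS n
  refine ⟨fun x => T (Sc n p + x • fderiv ℂ (Sc n) p (R • ξ)), by fun_prop,
    fun x hx => (hunif n).tendsto_at ?_, by simp [hleft p],
    hasDerivAt_line_comp_of_leftInverse (hdiffSc n p) (hT _) hleft (R • ξ)⟩
  simpa [hright _] using add_smul_mem_ball_zero hn hx

/-- for `{S_n} ⊆ Aut₀(ℂ^k)` satisfying the uniform upper-bound condition,
the infinitesimal Kobayashi metric on the basin of attraction `Ω_S` at the origin vanishes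
identically: for every `p ∈ Ω_S`, tangent vector `ξ` and `R > 0` there is a holomorphic
map `τ : Δ(0;1) → Ω_S` with `τ(0) = p` and `τ'(0) = Rξ`. -/
theorem stmt6 {k : ℕ} (hk : 2 ≤ k)
    (S Sinv : ℕ → EuclideanSpace ℂ (Fin k) → EuclideanSpace ℂ (Fin k))
    (hdiff : ∀ n, Differentiable ℂ (S n)) (hdiffinv : ∀ n, Differentiable ℂ (Sinv n))
    (hinv : ∀ n z, Sinv n (S n z) = z) (hinv' : ∀ n z, S n (Sinv n z) = z)
    (hfix : ∀ n, S n 0 = 0)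
    (r C : ℝ) (hr : 0 < r) (hC : C < 1)
    (hS : ∀ n, ∀ z ∈ ball (0 : EuclideanSpace ℂ (Fin k)) r, ‖S n z‖ ≤ C * ‖z‖)
    (Sc : ℕ → EuclideanSpace ℂ (Fin k) → EuclideanSpace ℂ (Fin k))
    (hSc0 : ∀ z, Sc 0 z = S 0 z) (hScS : ∀ n z, Sc (n + 1) z = S (n + 1) (Sc n z)) :
    ∀ p ∈ {z | Tendsto (fun n => Sc n z) atTop (nhds 0)},
      ∀ ξ : EuclideanSpace ℂ (Fin k), ∀ R : ℝ, 0 < R →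
        ∃ τ : ℂ → EuclideanSpace ℂ (Fin k),
          DifferentiableOn ℂ τ (ball (0 : ℂ) 1) ∧
          MapsTo τ (ball (0 : ℂ) 1) {z | Tendsto (fun n => Sc n z) atTop (nhds 0)} ∧
          τ 0 = p ∧ HasDerivAt τ (R • ξ) 0 :=
  stmt6_general S Sinv hdiff hdiffinv hinv hinv' r C hr hC hS Sc hSc0 hScS
end

section
/- Let {S_n}, {F_n} ⊂ Aut₀(C^k) with ‖S_n(z)‖ < C‖z‖ on B(0;r) for some C < 1 and all n. Set r₀ = Cr, fix 0 < δ < min{ε, 1−C} with ε < r − Cr, and C̃ = C + δ < 1. Suppose ‖F_n(z) − S_n(z)‖ < δ C̃^n r₀ for all z ∈ closure(B(0;r₀)) and all n ≥ 0. Then for every z ∈ closure(B(0;r₀)) and every n ≥ 0, F(n)(z) = F_n∘⋯∘F₀(z) ∈ B(0; C̃^{n+1} r₀). In particular B(0;r₀) is contained in the basin of attraction of {F_n} at the origin. -/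
open Filter Metric Set

/-- if `‖S_n(z)‖ ≤ C‖z‖` on `B(0;r)` with `0 < C < 1`, `r₀ = Cr`,
`0 < ε < r - Cr`, `0 < δ < min{ε, 1-C}`, `C̃ = C + δ`, and
`‖F_n(z) - S_n(z)‖ < δ C̃ⁿ r₀` on the closed ball of radius `r₀`, then for every `z` in
the closed ball of radius `r₀` and every `n`, `F(n)(z) ∈ B(0; C̃^{n+1} r₀)`; in particular
`B(0;r₀)` is contained in the basin of attraction of `{F_n}` at the origin. -/
theorem stmt11 {k : ℕ}
    (S F : ℕ → EuclideanSpace ℂ (Fin k) → EuclideanSpace ℂ (Fin k))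
    (hSaut : ∀ n, Differentiable ℂ (S n) ∧ Function.Bijective (S n) ∧ S n 0 = 0)
    (hFaut : ∀ n, Differentiable ℂ (F n) ∧ Function.Bijective (F n) ∧ F n 0 = 0)
    (C r ε δ : ℝ) (hC0 : 0 < C) (hC1 : C < 1)
    (hε : 0 < ε) (hεr : ε < r - C * r)
    (hδ0 : 0 < δ) (hδ : δ < min ε (1 - C))
    (hS : ∀ n, ∀ z ∈ ball (0 : EuclideanSpace ℂ (Fin k)) r, ‖S n z‖ ≤ C * ‖z‖)
    (hF : ∀ n, ∀ z ∈ closedBall (0 : EuclideanSpace ℂ (Fin k)) (C * r),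
      ‖F n z - S n z‖ < δ * (C + δ) ^ n * (C * r))
    (Fc : ℕ → EuclideanSpace ℂ (Fin k) → EuclideanSpace ℂ (Fin k))
    (hFc0 : ∀ z, Fc 0 z = F 0 z) (hFcS : ∀ n z, Fc (n + 1) z = F (n + 1) (Fc n z)) :
    (∀ z ∈ closedBall (0 : EuclideanSpace ℂ (Fin k)) (C * r), ∀ n,
      Fc n z ∈ ball (0 : EuclideanSpace ℂ (Fin k)) ((C + δ) ^ (n + 1) * (C * r))) ∧
    ball (0 : EuclideanSpace ℂ (Fin k)) (C * r) ⊆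
      {z | Tendsto (fun n => Fc n z) atTop (nhds 0)} := by
  have hδε : δ < ε := lt_of_lt_of_le hδ (min_le_left _ _)
  have hδC : δ < 1 - C := lt_of_lt_of_le hδ (min_le_right _ _)
  have hr : 0 < r := by nlinarith
  have hr0 : 0 < C * r := mul_pos hC0 hr
  have hCt0 : 0 < C + δ := by linarith
  have hCt1 : C + δ < 1 := by linarith
  have hr0r : C * r < r := by nlinarith
  -- key estimate: if w is in the closed ball of radius C*r and ‖w‖ ≤ ρ ≤ C*r then
  -- ‖F n w‖ < δ * (C+δ)^n * (C*r) + C * ρ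
  have key : ∀ n w, w ∈ closedBall (0 : EuclideanSpace ℂ (Fin k)) (C * r) →
      ‖F n w‖ < δ * (C + δ) ^ n * (C * r) + C * ‖w‖ := by
    intro n w hw
    have hwr : w ∈ ball (0 : EuclideanSpace ℂ (Fin k)) r := by
      rw [mem_closedBall, dist_zero_right] at hw
      rw [mem_ball, dist_zero_right]
      exact lt_of_le_of_lt hw hr0r
    have h1 := hF n w hw
    have h2 := hS n w hwr
    calc ‖F n w‖ ≤ ‖F n w - S n w‖ + ‖S n w‖ := by simpa using norm_add_le (F n w - S n w) (S n w)
      _ < δ * (C + δ) ^ n * (C * r) + C * ‖w‖ := by linarith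
  have main : ∀ z ∈ closedBall (0 : EuclideanSpace ℂ (Fin k)) (C * r), ∀ n,
      Fc n z ∈ ball (0 : EuclideanSpace ℂ (Fin k)) ((C + δ) ^ (n + 1) * (C * r)) := by
    intro z hz n
    induction n with
    | zero =>
      rw [mem_ball, dist_zero_right, hFc0]
      have := key 0 z hz
      rw [mem_closedBall, dist_zero_right] at hz
      have h2 : C * ‖z‖ ≤ C * (C * r) := by
        exact mul_le_mul_of_nonneg_left hz hC0.le
      calc ‖F 0 z‖ < δ * (C + δ) ^ 0 * (C * r) + C * ‖z‖ := this
        _ ≤ δ * (C * r) + C * (C * r) := by rw [pow_zero]; linarith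
        _ = (C + δ) ^ (0 + 1) * (C * r) := by ring
    | succ n ih =>
      rw [mem_ball, dist_zero_right] at ih
      have hpow : (C + δ) ^ (n + 1) ≤ 1 := pow_le_one₀ hCt0.le hCt1.le
      have hle : ‖Fc n z‖ < C * r := by
        calc ‖Fc n z‖ < (C + δ) ^ (n + 1) * (C * r) := ih
          _ ≤ 1 * (C * r) := by exact mul_le_mul_of_nonneg_right hpow hr0.le
          _ = C * r := one_mul _
      have hmem : Fc n z ∈ closedBall (0 : EuclideanSpace ℂ (Fin k)) (C * r) := by
        rw [mem_closedBall, dist_zero_right]; exact hle.le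
      have hk := key (n + 1) (Fc n z) hmem
      rw [mem_ball, dist_zero_right, hFcS]
      calc ‖F (n + 1) (Fc n z)‖
          < δ * (C + δ) ^ (n + 1) * (C * r) + C * ‖Fc n z‖ := hk
        _ < δ * (C + δ) ^ (n + 1) * (C * r) + C * ((C + δ) ^ (n + 1) * (C * r)) := by
            have := mul_lt_mul_of_pos_left ih hC0
            linarith
        _ = (C + δ) ^ (n + 1 + 1) * (C * r) := by ring
  refine ⟨main, fun z hz => ?_⟩
  have hz' : z ∈ closedBall (0 : EuclideanSpace ℂ (Fin k)) (C * r) := ball_subset_closedBall hz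
  have hbound : ∀ n, ‖Fc n z‖ ≤ (C + δ) ^ (n + 1) * (C * r) := by
    intro n
    have := main z hz' n
    rw [mem_ball, dist_zero_right] at this
    exact this.le
  have htend : Tendsto (fun n => (C + δ) ^ (n + 1) * (C * r)) atTop (nhds 0) := by
    have h := tendsto_pow_atTop_nhds_zero_of_lt_one hCt0.le hCt1
    have h2 := (h.comp (tendsto_add_atTop_nat 1)).mul_const (C * r)
    simpa using h2
  rw [mem_setOf_eq, tendsto_iff_norm_sub_tendsto_zero]
  simp only [sub_zero]
  exact squeeze_zero (fun n => norm_nonneg _) hbound htend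
end

section
/- Let {a_n} be a positive decreasing sequence and define shift-like maps S_n(z₁,…,z_k) = (P(z₁) + a_n z_k, a_n z₁, …, a_n z_{k-1}) on C^k, k ≥ 2 (for k = 2, S_n(z₁,z₂) = (P(z₁) + a_n z₂, a_n z₁)), where P is a polynomial with P(0) = 0, P'(0) = 0. Suppose z ∈ C^k satisfies: at some step ñ, |π₂(S(ñ)(z))| > R while |π_i(S(n)(z))| ≤ R for all 2 ≤ i ≤ k and all n < ñ, where R is such that |P(ζ) + w| ≥ 2|ζ| whenever |ζ| ≥ R and |w| ≤ R. Then |π₁(S(ñ−1)(z))| > R, i.e., S(ñ−1)(z) lies in the set V_R⁺ = {z : |z_j| ≤ max{|z₁|, R} for all j, |z₁| > R}, and consequently ‖S(n)(z)‖ → ∞. -/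
/-!
The point `w = S(N)(z)` already lies in `V_R⁺`: its coordinates of index `≥ 2` are `≤ R` by
hypothesis, and `|π₂(S(N+1)(z))| = a_{N+1} |π₁(w)| ≤ |π₁(w)|` forces `|π₁(w)| > R`.
Since every `a_n ≤ 1`, a shift-like map maps `V_R⁺` into itself and at least doubles `|π₁|`
there, by the defining property of `R`; so `|π₁|` grows geometrically along the orbit.
-/

open Filter

variable {n : ℕ}

structure IsShiftLike (f : ℂ → ℂ) (c : ℝ) (T : (Fin (n + 1) → ℂ) → Fin (n + 1) → ℂ) : Prop where
  apply_zero : ∀ w, T w 0 = f (w 0) + c * w (Fin.last n)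
  apply_succ : ∀ w (j : Fin n), T w j.succ = c * w j.castSucc

/-- `V_R⁺`; coordinate `0` plays the role of `z₁`. -/
def escapeRegion (R : ℝ) : Set (Fin (n + 1) → ℂ) :=
  {w | R < ‖w 0‖ ∧ ∀ j, ‖w j‖ ≤ max ‖w 0‖ R}

lemma norm_ofReal_mul_le {c : ℝ} (hc0 : 0 ≤ c) (hc1 : c ≤ 1) (x : ℂ) : ‖(c : ℂ) * x‖ ≤ ‖x‖ := by
  rw [norm_mul, Complex.norm_real, Real.norm_of_nonneg hc0]
  exact mul_le_of_le_one_left (norm_nonneg x) hc1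

namespace IsShiftLike

variable {f : ℂ → ℂ} {c R : ℝ} {T : (Fin (n + 1) → ℂ) → Fin (n + 1) → ℂ}

lemma norm_apply_succ_le (hT : IsShiftLike f c T) (hc0 : 0 ≤ c) (hc1 : c ≤ 1)
    (w : Fin (n + 1) → ℂ) (j : Fin n) : ‖T w j.succ‖ ≤ ‖w j.castSucc‖ := by
  rw [hT.apply_succ]
  exact norm_ofReal_mul_le hc0 hc1 _

lemma two_mul_norm_le (hT : IsShiftLike f c T) (hc0 : 0 ≤ c) (hc1 : c ≤ 1)
    (hf : ∀ ζ w : ℂ, R ≤ ‖ζ‖ → ‖w‖ ≤ max R ‖ζ‖ → 2 * ‖ζ‖ ≤ ‖f ζ + w‖)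
    {w : Fin (n + 1) → ℂ} (hw : w ∈ escapeRegion R) : 2 * ‖w 0‖ ≤ ‖T w 0‖ := by
  rw [hT.apply_zero]
  refine hf _ _ hw.1.le ?_
  calc ‖(c : ℂ) * w (Fin.last n)‖ ≤ ‖w (Fin.last n)‖ := norm_ofReal_mul_le hc0 hc1 _
    _ ≤ max R ‖w 0‖ := (hw.2 _).trans_eq (max_comm _ _)

lemma apply_mem_escapeRegion (hT : IsShiftLike f c T) (hc0 : 0 ≤ c) (hc1 : c ≤ 1)
    (hf : ∀ ζ w : ℂ, R ≤ ‖ζ‖ → ‖w‖ ≤ max R ‖ζ‖ → 2 * ‖ζ‖ ≤ ‖f ζ + w‖)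
    {w : Fin (n + 1) → ℂ} (hw : w ∈ escapeRegion R) : T w ∈ escapeRegion R := by
  have hgrow : ‖w 0‖ ≤ ‖T w 0‖ := by
    linarith [hT.two_mul_norm_le hc0 hc1 hf hw, norm_nonneg (w 0)]
  refine ⟨hw.1.trans_le hgrow, Fin.cases (le_max_left _ _) fun j => ?_⟩
  calc ‖T w j.succ‖ ≤ ‖w j.castSucc‖ := hT.norm_apply_succ_le hc0 hc1 w j
    _ ≤ max ‖w 0‖ R := hw.2 _
    _ ≤ max ‖T w 0‖ R := max_le_max_right R hgrow

end IsShiftLike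

lemma tendsto_norm_orbit_of_mem_escapeRegion {f : ℂ → ℂ} {c : ℕ → ℝ} {R : ℝ}
    {T : ℕ → (Fin (n + 1) → ℂ) → Fin (n + 1) → ℂ} (hT : ∀ k, IsShiftLike f (c k) (T k))
    (hc0 : ∀ k, 0 ≤ c k) (hc1 : ∀ k, c k ≤ 1) (hR0 : 0 < R)
    (hf : ∀ ζ w : ℂ, R ≤ ‖ζ‖ → ‖w‖ ≤ max R ‖ζ‖ → 2 * ‖ζ‖ ≤ ‖f ζ + w‖)
    {x : ℕ → Fin (n + 1) → ℂ} (hx : ∀ k, x (k + 1) = T k (x k))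
    (hx0 : x 0 ∈ escapeRegion R) : Tendsto (fun k => ‖x k‖) atTop atTop := by
  have hmem : ∀ k, x k ∈ escapeRegion R := by
    intro k
    induction k with
    | zero => exact hx0
    | succ k ih => rw [hx]; exact (hT k).apply_mem_escapeRegion (hc0 k) (hc1 k) hf ih
  have hdouble : ∀ k, 2 * ‖x k 0‖ ≤ ‖x (k + 1) 0‖ := fun k => by
    rw [hx]; exact (hT k).two_mul_norm_le (hc0 k) (hc1 k) hf (hmem k)
  refine tendsto_atTop_mono (fun k => norm_le_pi_norm (x k) 0) ?_
  exact tendsto_atTop_of_geom_le (hR0.trans hx0.1) one_lt_two hdouble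

theorem stmt14_general {m : ℕ} (P : Polynomial ℂ)
    (a : ℕ → ℝ) (ha : ∀ n, 0 < a n) (ha1 : ∀ n, a n ≤ 1)
    (R : ℝ) (hR0 : 0 < R)
    (hR : ∀ ζ w : ℂ, R ≤ ‖ζ‖ → ‖w‖ ≤ max R ‖ζ‖ → 2 * ‖ζ‖ ≤ ‖P.eval ζ + w‖)
    (S : ℕ → (Fin (m + 2) → ℂ) → (Fin (m + 2) → ℂ))
    (hS0 : ∀ n z, S n z 0 = P.eval (z 0) + (a n : ℂ) * z (Fin.last (m + 1)))
    (hSsucc : ∀ n z (j : Fin (m + 1)), S n z j.succ = (a n : ℂ) * z j.castSucc)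
    (Sc : ℕ → (Fin (m + 2) → ℂ) → (Fin (m + 2) → ℂ))
    (hScS : ∀ n z, Sc (n + 1) z = S (n + 1) (Sc n z))
    (z : Fin (m + 2) → ℂ) (N : ℕ)
    (hesc : R < ‖Sc (N + 1) z 1‖)
    (hbefore : ∀ n ≤ N, ∀ j : Fin (m + 1), ‖Sc n z j.succ‖ ≤ R) :
    R < ‖Sc N z 0‖ ∧
    (∀ j : Fin (m + 2), ‖Sc N z j‖ ≤ max ‖Sc N z 0‖ R) ∧
    Tendsto (fun n => ‖Sc n z‖) atTop atTop := by
  have hT : ∀ n, IsShiftLike P.eval (a n) (S n) := fun n => ⟨hS0 n, hSsucc n⟩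
  have ha0 : ∀ n, 0 ≤ a n := fun n => (ha n).le
  have hfirst : R < ‖Sc N z 0‖ := by
    have h := (hT (N + 1)).norm_apply_succ_le (ha0 _) (ha1 _) (Sc N z) 0
    rw [← hScS, Fin.succ_zero_eq_one', Fin.castSucc_zero] at h
    exact hesc.trans_le h
  have hmem : Sc N z ∈ escapeRegion R :=
    ⟨hfirst, Fin.cases (le_max_left _ _) fun j => (hbefore N le_rfl j).trans (le_max_right _ _)⟩
  refine ⟨hfirst, hmem.2, ?_⟩
  have horbit := tendsto_norm_orbit_of_mem_escapeRegion (fun k => hT (N + k + 1))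
    (fun k => ha0 _) (fun k => ha1 _) hR0 hR (x := fun k => Sc (N + k) z)
    (fun k => hScS (N + k) z) hmem
  exact (tendsto_add_atTop_iff_nat N).mp (by simpa only [add_comm N] using horbit)

/-- escape to infinity for shift-like maps
`S_n(z₁,…,z_k) = (P(z₁) + a_n z_k, a_n z₁, …, a_n z_{k-1})` on `ℂ^k`, `k = m + 2 ≥ 2`.
If at step `ñ = N + 1` the second coordinate of the orbit exceeds `R` while all
coordinates of index `≥ 2` were `≤ R` before, then `|π₁(S(N)(z))| > R`, the point
`S(N)(z)` lies in the escape region `V_R⁺`, and `‖S(n)(z)‖ → ∞`. -/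
theorem stmt14 {m : ℕ} (P : Polynomial ℂ)
    (hP0 : P.coeff 0 = 0) (hP1 : P.coeff 1 = 0) (hPdeg : 2 ≤ P.natDegree)
    (a : ℕ → ℝ) (ha : ∀ n, 0 < a n) (hadec : ∀ n, a (n + 1) ≤ a n) (ha1 : ∀ n, a n ≤ 1)
    (R : ℝ) (hR0 : 0 < R)
    (hR : ∀ ζ w : ℂ, R ≤ ‖ζ‖ → ‖w‖ ≤ max R ‖ζ‖ → 2 * ‖ζ‖ ≤ ‖P.eval ζ + w‖)
    (S : ℕ → (Fin (m + 2) → ℂ) → (Fin (m + 2) → ℂ))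
    (hS0 : ∀ n z, S n z 0 = P.eval (z 0) + (a n : ℂ) * z (Fin.last (m + 1)))
    (hSsucc : ∀ n z (j : Fin (m + 1)), S n z j.succ = (a n : ℂ) * z j.castSucc)
    (Sc : ℕ → (Fin (m + 2) → ℂ) → (Fin (m + 2) → ℂ))
    (hSc0 : ∀ z, Sc 0 z = S 0 z) (hScS : ∀ n z, Sc (n + 1) z = S (n + 1) (Sc n z))
    (z : Fin (m + 2) → ℂ) (N : ℕ)
    (hesc : R < ‖Sc (N + 1) z 1‖)
    (hbefore : ∀ n ≤ N, ∀ j : Fin (m + 1), ‖Sc n z j.succ‖ ≤ R) :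
    R < ‖Sc N z 0‖ ∧
    (∀ j : Fin (m + 2), ‖Sc N z j‖ ≤ max ‖Sc N z 0‖ R) ∧
    Tendsto (fun n => ‖Sc n z‖) atTop atTop :=
  stmt14_general P a ha ha1 R hR0 hR S hS0 hSsucc Sc hScS z N hesc hbefore
end

section
/- Let A ⊂ C^k be a set such that for every ε > 0 there exists n with: (a) a family of balls of radius ε/3 covering a set J_n with d_H(A ∩ U_n, J_n) < η_n where η_n < ε/3, and (b) for every ball B of that family, γ_h^{ε_n}(J_n ∩ B) > 2^{n} for a sequence ε_n → 0, where additionally any covering of A ∩ B(z;ε) by balls of radius ε_n enlarged to radius ε̂_n (with 2ε_n^{h} = ε̂_n^{h} and η_n < ε̂_n − ε_n) covers J_n ∩ B. Then for every z ∈ A, μ_h(A ∩ B(z;ε)) = ∞ for all small ε > 0; hence the upper box dimension of A at every point is at least h. -/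
open Filter Metric Set
open scoped ENNReal NNReal

/-- The minimal number (in `ℝ≥0∞`) of balls of radius `ε` needed to cover `K`. -/
noncomputable def coverNum {X : Type*} [MetricSpace X] (K : Set X) (ε : ℝ) : ℝ≥0∞ :=
  ⨅ (s : Finset X) (_ : K ⊆ ⋃ x ∈ s, Metric.ball x ε), (s.card : ℝ≥0∞)

/-- `γ_h^ε(K) = ε^h ·` (minimal number of `ε`-balls covering `K`). -/
noncomputable def boxGamma {X : Type*} [MetricSpace X] (h : ℝ) (K : Set X) (ε : ℝ) :
    ℝ≥0∞ :=
  ENNReal.ofReal (ε ^ h) * coverNum K ε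

/-- The `h`-dimensional upper box (Minkowski) content. -/
noncomputable def boxContent {X : Type*} [MetricSpace X] (h : ℝ) (K : Set X) : ℝ≥0∞ :=
  Filter.limsup (fun ε => boxGamma h K ε) (nhdsWithin (0 : ℝ) (Set.Ioi 0))

/-!
Covering numbers pass between Hausdorff-close sets at the cost of enlarging the radius:
if `d_H(J, T) < ε̂ - ε`, every cover of `T` by `ε`-balls becomes a cover of `J` by
`ε̂`-balls with the same centres. Since `ε̂^h = 2 ε^h`, this gives
`γ_h^{ε̂}(J) ≤ 2 γ_h^{ε}(T)`, so `γ_h^{ε_n}(A ∩ B̄(z;ε)) > 2^{n-1}` along scales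
`ε_n → 0` with `n` arbitrarily large, and the upper box content is infinite.
-/

open Topology

section MetricSpace

variable {X : Type*} [MetricSpace X]

theorem coverNum_empty (ε : ℝ) : coverNum (∅ : Set X) ε = 0 :=
  nonpos_iff_eq_zero.mp <| iInf₂_le_of_le ∅ (empty_subset _) (by simp)

theorem Set.Nonempty.of_boxGamma_ne_zero {h ε : ℝ} {K : Set X} (hK : boxGamma h K ε ≠ 0) :
    K.Nonempty := by
  rw [nonempty_iff_ne_empty]
  rintro rfl
  simp [boxGamma, coverNum_empty] at hK

theorem coverNum_le_of_hausdorffDist_lt {J K : Set X} {ε ε' : ℝ}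
    (hfin : hausdorffEDist J K ≠ ⊤) (hd : hausdorffDist J K < ε' - ε) :
    coverNum J ε' ≤ coverNum K ε := by
  refine le_iInf₂ fun s hs => iInf₂_le s fun y hy => ?_
  obtain ⟨t, ht, hyt⟩ := exists_dist_lt_of_hausdorffDist_lt hy hd hfin
  obtain ⟨x, hx, htx⟩ := mem_iUnion₂.mp (hs ht)
  refine mem_iUnion₂.mpr ⟨x, hx, mem_ball.mpr ?_⟩
  linarith [dist_triangle y t x, mem_ball.mp htx]

theorem boxGamma_le_mul_of_coverNum_le {J K : Set X} {h c ε ε' : ℝ} (hc : 0 ≤ c)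
    (hpow : c * ε ^ h = ε' ^ h) (hcov : coverNum J ε' ≤ coverNum K ε) :
    boxGamma h J ε' ≤ ENNReal.ofReal c * boxGamma h K ε := by
  rw [boxGamma, boxGamma, ← mul_assoc, ← ENNReal.ofReal_mul hc, hpow]
  exact mul_le_mul_right hcov _

theorem boxGamma_le_two_mul_of_hausdorffDist_lt {J K : Set X} {h ε ε' : ℝ}
    (hJ : Bornology.IsBounded J) (hK : Bornology.IsBounded K) (hKne : K.Nonempty)
    (hJγ : boxGamma h J ε' ≠ 0) (hpow : 2 * ε ^ h = ε' ^ h)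
    (hd : hausdorffDist J K < ε' - ε) :
    boxGamma h J ε' ≤ 2 * boxGamma h K ε := by
  have hfin : hausdorffEDist J K ≠ ⊤ :=
    hausdorffEDist_ne_top_of_nonempty_of_bounded (.of_boxGamma_ne_zero hJγ) hKne hJ hK
  simpa using boxGamma_le_mul_of_coverNum_le zero_le_two hpow
    (coverNum_le_of_hausdorffDist_lt hfin hd)

theorem boxContent_eq_top_of_frequently {h : ℝ} {K : Set X}
    (H : ∀ m : ℕ, ∃ᶠ ε in 𝓝[>] 0, (m : ℝ≥0∞) ≤ boxGamma h K ε) : boxContent h K = ⊤ := by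
  refine ENNReal.eq_top_of_forall_nnreal_le fun r => ?_
  obtain ⟨m, hm⟩ := exists_nat_ge r
  exact (by exact_mod_cast hm : (r : ℝ≥0∞) ≤ m).trans (le_limsup_of_frequently_le' (H m))

end MetricSpace

theorem frequently_nhdsGT_zero_of_forall_nat {P : ℝ → Prop}
    (H : ∀ N : ℕ, ∃ x : ℝ, 0 < x ∧ x < 1 / (N + 1) ∧ P x) : ∃ᶠ x in 𝓝[>] 0, P x := by
  refine frequently_iff.mpr fun hU => ?_
  obtain ⟨δ, hδ, hsub⟩ := mem_nhdsGT_iff_exists_Ioo_subset.mp hU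
  obtain ⟨N, hN⟩ := exists_nat_one_div_lt (mem_Ioi.mp hδ)
  obtain ⟨x, hx, hxN, hPx⟩ := H N
  exact ⟨x, hsub ⟨hx, hxN.trans hN⟩, hPx⟩

theorem ENNReal.natCast_le_of_two_pow_lt_two_mul {m n : ℕ} {x : ℝ≥0∞} (hmn : m < n)
    (hx : 2 ^ n < 2 * x) : (m : ℝ≥0∞) ≤ x := by
  obtain ⟨p, rfl⟩ : ∃ p, n = p + 1 := ⟨n - 1, by omega⟩
  rw [pow_succ', ENNReal.mul_lt_mul_iff_right two_ne_zero ofNat_ne_top] at hx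
  calc (m : ℝ≥0∞) ≤ 2 ^ m := by exact_mod_cast Nat.lt_two_pow_self.le
    _ ≤ 2 ^ p := pow_le_pow_right₀ one_le_two (by omega)
    _ ≤ x := hx.le

theorem stmt16_general {k : ℕ} (A : Set (EuclideanSpace ℂ (Fin k))) (h : ℝ)
    (hyp : ∀ z ∈ A, ∃ ε₀ > 0, ∀ ε : ℝ, 0 < ε → ε < ε₀ →
      ∀ m : ℕ, ∃ n, m ≤ n ∧
        ∃ (J : Set (EuclideanSpace ℂ (Fin k))) (ηn εn εhatn : ℝ),
          0 < εn ∧ εn < 1 / (m + 1) ∧ 0 < ηn ∧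
          2 * εn ^ h = εhatn ^ h ∧ ηn < εhatn - εn ∧
          J ⊆ closedBall z ε ∧
          hausdorffDist J (A ∩ closedBall z ε) < ηn ∧
          (2 : ℝ≥0∞) ^ n < boxGamma h J εhatn) :
    ∀ z ∈ A, ∃ ε₀ > 0, ∀ ε : ℝ, 0 < ε → ε < ε₀ →
      boxContent h (A ∩ closedBall z ε) = ⊤ := by
  intro z hz
  obtain ⟨ε₀, hε₀, H⟩ := hyp z hz
  refine ⟨ε₀, hε₀, fun ε hε hεε₀ => boxContent_eq_top_of_frequently fun m =>
    frequently_nhdsGT_zero_of_forall_nat fun N => ?_⟩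
  obtain ⟨n, hn, J, ηn, εn, εhatn, hεn, hεnN, -, hpow, hηn, hJ, hd, hγ⟩ :=
    H ε hε hεε₀ (max (m + 1) N)
  refine ⟨εn, hεn, hεnN.trans_le (Nat.one_div_le_one_div (le_max_right _ _)), ?_⟩
  have hbound : boxGamma h J εhatn ≤ 2 * boxGamma h (A ∩ closedBall z ε) εn :=
    boxGamma_le_two_mul_of_hausdorffDist_lt (isBounded_closedBall.subset hJ)
      (isBounded_closedBall.subset inter_subset_right) ⟨z, hz, mem_closedBall_self hε.le⟩
      (ne_bot_of_gt hγ) hpow (hd.trans hηn)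
  exact ENNReal.natCast_le_of_two_pow_lt_two_mul (by omega) (hγ.trans_le hbound)

/-- suppose `A ⊆ ℂ^k` is such that near every point `z ∈ A` and at every
sufficiently small scale `ε`, there are arbitrarily large `n`, sets `J_n` with
`d_H(J_n, A ∩ B̄(z;ε)) < η_n`, and scales `ε_n → 0`, `ε̂_n` with `2 ε_n^h = ε̂_n^h` and
`η_n < ε̂_n − ε_n`, with `γ_h^{ε̂_n}(J_n) > 2^n` (so that, enlarging radii, covering-number
lower bounds transfer from `J_n` to `A ∩ B̄(z;ε)`). Then for every `z ∈ A` and all small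
`ε > 0`, `μ_h(A ∩ B̄(z;ε)) = ∞`; hence the upper box dimension of `A` at every point is
at least `h`. -/
theorem stmt16 {k : ℕ} (A : Set (EuclideanSpace ℂ (Fin k))) (h : ℝ) (hh : 0 < h)
    (hyp : ∀ z ∈ A, ∃ ε₀ > 0, ∀ ε : ℝ, 0 < ε → ε < ε₀ →
      ∀ m : ℕ, ∃ n, m ≤ n ∧
        ∃ (J : Set (EuclideanSpace ℂ (Fin k))) (ηn εn εhatn : ℝ),
          0 < εn ∧ εn < 1 / (m + 1) ∧ 0 < ηn ∧
          2 * εn ^ h = εhatn ^ h ∧ ηn < εhatn - εn ∧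
          J ⊆ closedBall z ε ∧
          hausdorffDist J (A ∩ closedBall z ε) < ηn ∧
          (2 : ℝ≥0∞) ^ n < boxGamma h J εhatn) :
    ∀ z ∈ A, ∃ ε₀ > 0, ∀ ε : ℝ, 0 < ε → ε < ε₀ →
      boxContent h (A ∩ closedBall z ε) = ⊤ :=
  stmt16_general A h hyp
end
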